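/- Let k be a field of characteristic zero with algebraic closure k̄, let A be a complete local k̄-algebra, let G be a finite group acting on A by k̄-algebra automorphisms, and let y ∈ A be an element generating a G-invariant ideal, with y not a zero divisor. Then the element y' = |G|^{-1} · Σ_{σ∈G} c_σ · σ(y), where c_σ ∈ k̄ is the residue (image in the residue field) of y/σ(y), generates the same ideal as y, and G acts on the line spanned by y' by a character, i.e., for each σ ∈ G there is λ_σ ∈ k̄ with σ(y') = λ_σ · y'. -/

import Mathlib

/-!
Since `y` is a nonzerodivisor, the units `u σ` with `y = u σ * σ • y` satisfy the cocycle
relation `u (σ τ) = u σ * σ • u τ`. The action fixes `k̄` and preserves the maximal ideal, so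
passing to residues turns the cocycle into the character `σ ↦ c σ`. Averaging `σ • y` against
this character makes `y'` an eigenvector with eigenvalue `c σ⁻¹`, and `y' = w * y` where `w`
is congruent to the average of the `c σ * (u σ)⁻¹ ≡ 1`, hence a unit.
-/

open IsLocalRing

section Congruences

variable {R k A : Type*} [CommSemiring R] [Field k] [CommRing A] [Algebra R A] [Algebra k A]

theorem mul_sub_algebraMap_mul_mem {I : Ideal A} {x x' : A} {a a' : R}
    (hx : x - algebraMap R A a ∈ I) (hx' : x' - algebraMap R A a' ∈ I) :
    x * x' - algebraMap R A (a * a') ∈ I := by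
  have : x * x' - algebraMap R A (a * a') =
      x * (x' - algebraMap R A a') + (x - algebraMap R A a) * algebraMap R A a' := by
    rw [map_mul]; ring
  rw [this]
  exact I.add_mem (I.mul_mem_left _ hx') (I.mul_mem_right _ hx)

theorem algebraMap_mul_inv_sub_one_mem {I : Ideal A} {u : Aˣ} {a : R}
    (hu : (u : A) - algebraMap R A a ∈ I) : algebraMap R A a * ↑u⁻¹ - 1 ∈ I := by
  have : algebraMap R A a * ↑u⁻¹ - 1 = -(((u : A) - algebraMap R A a) * ↑u⁻¹) := by
    rw [sub_mul, Units.mul_inv]; ring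
  rw [this]
  exact I.neg_mem (I.mul_mem_right _ hu)

theorem algebraMap_inv_card_mul_sum_sub_one_mem {ι : Type*} [Fintype ι] {I : Ideal A}
    (hn : (Fintype.card ι : k) ≠ 0) {x : ι → A} (hx : ∀ i, x i - 1 ∈ I) :
    algebraMap k A (Fintype.card ι : k)⁻¹ * ∑ i, x i - 1 ∈ I := by
  have hinv : algebraMap k A (Fintype.card ι : k)⁻¹ * Fintype.card ι = 1 := by
    rw [← map_natCast (algebraMap k A), ← map_mul, inv_mul_cancel₀ hn, map_one]
  have : algebraMap k A (Fintype.card ι : k)⁻¹ * ∑ i, x i - 1 =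
      algebraMap k A (Fintype.card ι : k)⁻¹ * ∑ i, (x i - 1) := by
    rw [Finset.sum_sub_distrib, mul_sub, Finset.sum_const, Finset.card_univ, nsmul_one, hinv]
  rw [this]
  exact I.mul_mem_left _ (I.sum_mem fun i _ => hx i)

variable [IsLocalRing A]

theorem isUnit_of_sub_one_mem_maximalIdeal {x : A} (hx : x - 1 ∈ maximalIdeal A) : IsUnit x :=
  isUnit_of_mem_nonunits_one_sub_self x (by rw [← neg_sub]; exact (maximalIdeal A).neg_mem hx)

theorem eq_of_sub_algebraMap_mem_maximalIdeal {x : A} {a b : k}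
    (ha : x - algebraMap k A a ∈ maximalIdeal A) (hb : x - algebraMap k A b ∈ maximalIdeal A) :
    a = b := by
  by_contra hab
  have hmem : algebraMap k A (b - a) ∈ maximalIdeal A := by
    rw [map_sub, ← sub_sub_sub_cancel_left _ _ x]
    exact (maximalIdeal A).sub_mem ha hb
  exact hmem ((sub_ne_zero.mpr (Ne.symm hab)).isUnit.map _)

theorem isUnit_algebraMap_inv_card_mul_sum_mul_inv {ι : Type*} [Fintype ι]
    (hn : (Fintype.card ι : k) ≠ 0) {u : ι → Aˣ} {a : ι → k}
    (hu : ∀ i, (u i : A) - algebraMap k A (a i) ∈ maximalIdeal A) :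
    IsUnit (algebraMap k A (Fintype.card ι : k)⁻¹ * ∑ i, algebraMap k A (a i) * ↑(u i)⁻¹) :=
  isUnit_of_sub_one_mem_maximalIdeal <|
    algebraMap_inv_card_mul_sum_sub_one_mem hn fun i => algebraMap_mul_inv_sub_one_mem (hu i)

end Congruences

section GroupAction

variable {k A G : Type*} [CommRing A] [Group G] [MulSemiringAction G A]

theorem smul_mem_nonZeroDivisors (σ : G) {y : A} (hy : y ∈ nonZeroDivisors A) :
    σ • y ∈ nonZeroDivisors A := by
  rw [← MulSemiringAction.toRingEquiv_apply_apply G A σ,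
    ← MulEquivClass.map_nonZeroDivisors (MulSemiringAction.toRingEquiv G A σ)]
  exact Submonoid.mem_map_of_mem _ hy

theorem smul_mem_maximalIdeal_iff [IsLocalRing A] (σ : G) (x : A) :
    σ • x ∈ maximalIdeal A ↔ x ∈ maximalIdeal A := by
  simp only [mem_maximalIdeal, mem_nonunits_iff,
    ← MulSemiringAction.toRingEquiv_apply_apply G A σ, isUnit_map_iff]

theorem mul_smul_of_eq_mul_smul {y : A} (hy : y ∈ nonZeroDivisors A) {u : G → A}
    (hu : ∀ σ, y = u σ * σ • y) (σ τ : G) : u (σ * τ) = u σ * σ • u τ := by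
  refine (mul_cancel_right_mem_nonZeroDivisors (smul_mem_nonZeroDivisors (σ * τ) hy)).mp ?_
  rw [← hu, mul_assoc, mul_smul, ← smul_mul', ← hu, ← hu]

theorem smul_sub_algebraMap_mem_maximalIdeal [CommSemiring k] [Algebra k A] [IsLocalRing A]
    (halg : ∀ (σ : G) (a : k), σ • algebraMap k A a = algebraMap k A a) {x : A} {a : k}
    (hx : x - algebraMap k A a ∈ maximalIdeal A) (σ : G) :
    σ • x - algebraMap k A a ∈ maximalIdeal A := by
  rwa [← halg σ a, ← smul_sub, smul_mem_maximalIdeal_iff]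

theorem map_mul_of_eq_mul_smul [Field k] [Algebra k A] [IsLocalRing A]
    (halg : ∀ (σ : G) (a : k), σ • algebraMap k A a = algebraMap k A a)
    {y : A} (hy : y ∈ nonZeroDivisors A) {u : G → A} (hu : ∀ σ, y = u σ * σ • y) {c : G → k}
    (hc : ∀ σ, u σ - algebraMap k A (c σ) ∈ maximalIdeal A) (σ τ : G) :
    c (σ * τ) = c σ * c τ :=
  eq_of_sub_algebraMap_mem_maximalIdeal (hc (σ * τ)) <| mul_smul_of_eq_mul_smul hy hu σ τ ▸
    mul_sub_algebraMap_mul_mem (hc σ) (smul_sub_algebraMap_mem_maximalIdeal halg (hc τ) σ)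

theorem smul_sum_algebraMap_mul_smul [CommSemiring k] [Algebra k A] [Fintype G]
    (halg : ∀ (σ : G) (a : k), σ • algebraMap k A a = algebraMap k A a)
    {c : G → k} (hc : ∀ σ τ, c (σ * τ) = c σ * c τ) (σ : G) (y : A) :
    σ • ∑ τ, algebraMap k A (c τ) * τ • y =
      algebraMap k A (c σ⁻¹) * ∑ τ, algebraMap k A (c τ) * τ • y := by
  rw [Finset.smul_sum, Finset.mul_sum]
  refine Fintype.sum_equiv (Equiv.mulLeft σ) _ _ fun τ => ?_
  rw [Equiv.coe_mulLeft, smul_mul', halg, smul_smul, ← mul_assoc, ← map_mul, ← hc,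
    inv_mul_cancel_left]

end GroupAction

theorem statement0_general {kbar : Type*} [Field kbar] [CharZero kbar]
    {A : Type*} [CommRing A] [IsLocalRing A] [Algebra kbar A]
    {G : Type*} [Group G] [Fintype G] [MulSemiringAction G A]
    (halg : ∀ (σ : G) (c : kbar), σ • (algebraMap kbar A c) = algebraMap kbar A c)
    (y : A) (hy : y ∈ nonZeroDivisors A)
    (c : G → kbar)
    (hc : ∀ σ : G, ∃ u : Aˣ, y = (u : A) * (σ • y) ∧
      (u : A) - algebraMap kbar A (c σ) ∈ maximalIdeal A) :
    letI y' : A := algebraMap kbar A ((Fintype.card G : kbar)⁻¹) *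
      ∑ σ : G, algebraMap kbar A (c σ) * (σ • y)
    Ideal.span {y'} = Ideal.span {y} ∧
    ∀ σ : G, ∃ lam : kbar, σ • y' = algebraMap kbar A lam * y' := by
  choose u hyu hu using hc
  refine ⟨?_, fun σ => ⟨c σ⁻¹, ?_⟩⟩
  · have hsmul : ∀ σ, σ • y = ↑(u σ)⁻¹ * y := fun σ =>
      (Units.eq_inv_mul_iff_mul_eq _).mpr (hyu σ).symm
    have hw := isUnit_algebraMap_inv_card_mul_sum_mul_inv
      (Nat.cast_ne_zero.mpr Fintype.card_ne_zero) hu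
    simp_rw [hsmul, ← mul_assoc, ← Finset.sum_mul, ← mul_assoc]
    exact Ideal.span_singleton_mul_left_unit hw y
  · rw [smul_mul', halg, smul_sum_algebraMap_mul_smul halg
      (map_mul_of_eq_mul_smul halg hy hyu hu), mul_left_comm]

/-- Let `k̄` be an algebraically closed field of characteristic zero, `A` a
complete (Noetherian) local `k̄`-algebra with residue field `k̄`, `G` a finite group
acting on `A` by `k̄`-algebra automorphisms, and `y ∈ A` a nonzerodivisor generating a
`G`-invariant ideal.  For `σ ∈ G` let `c σ ∈ k̄` be the residue of the unit `y/σ(y)`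
(so `y = u_σ · σ(y)` with `u_σ ≡ c σ mod m`).  Then
`y' = |G|⁻¹ · Σ_σ c_σ · σ(y)` generates the same ideal as `y`, and `G` acts on the line
spanned by `y'` by a character: for each `σ` there is `λ_σ ∈ k̄` with
`σ(y') = λ_σ · y'`. -/
theorem statement0 {kbar : Type*} [Field kbar] [IsAlgClosed kbar] [CharZero kbar]
    {A : Type*} [CommRing A] [IsNoetherianRing A] [IsLocalRing A] [Algebra kbar A]
    [IsAdicComplete (maximalIdeal A) A]
    (hres : Function.Bijective ((residue A).comp (algebraMap kbar A)))
    {G : Type*} [Group G] [Fintype G] [MulSemiringAction G A]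
    (halg : ∀ (σ : G) (c : kbar), σ • (algebraMap kbar A c) = algebraMap kbar A c)
    (y : A) (hy : y ∈ nonZeroDivisors A)
    (hGy : ∀ σ : G, σ • y ∈ Ideal.span {y})
    (c : G → kbar)
    (hc : ∀ σ : G, ∃ u : Aˣ, y = (u : A) * (σ • y) ∧
      (u : A) - algebraMap kbar A (c σ) ∈ maximalIdeal A) :
    letI y' : A := algebraMap kbar A ((Fintype.card G : kbar)⁻¹) *
      ∑ σ : G, algebraMap kbar A (c σ) * (σ • y)
    Ideal.span {y'} = Ideal.span {y} ∧
    ∀ σ : G, ∃ lam : kbar, σ • y' = algebraMap kbar A lam * y' :=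
  statement0_general halg y hy c hc
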